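/- arXiv:2107.12756 — 6 statements merged into one kernel-verified Lean document; each statement's English description precedes it below -/
import Mathlib

section
/- Let Y be a Banach space and g : Y → ℝ a convex, continuous functional that is bounded from below. Then there exist sequences (v_k) in Y and (y_k*) in the dual Y* such that (i) g(v_k) → inf_{y∈Y} g(y), (ii) y_k* belongs to the (Fenchel) subdifferential of g at v_k for every k, (iii) |⟨y_k*, v_k⟩| → 0, and (iv) ‖y_k*‖ → 0. -/
/-!
For `ε = 1 / (k + 1)`, pick an `ε`-minimizer `x` of `g` and apply Ekeland's variational
principle with weight `δ = ε / (‖x‖ + 1)`: it yields `v` with `g v ≤ g x` which minimizes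
`g + δ‖· - v‖`, and `‖v - x‖ ≤ ‖x‖ + 1`. Separating (Hahn–Banach) the open strict epigraph of `g` from the hypograph
of `g v - δ‖· - v‖` gives a subgradient `y` of `g` at `v` with `‖y‖ ≤ δ ≤ ε`, hence
`|y v| ≤ δ‖v‖ ≤ 2ε`. Ekeland's principle itself comes from nesting the closed sets
`{z | f z + δ d(z, x) ≤ f x}` around successive almost-minimizers; their radii shrink to zero.
-/

open Filter Topology Set

theorem Set.Nonempty.exists_forall_le_add {X : Type*} {f : X → ℝ} {s : Set X} (hs : s.Nonempty)
    (hbdd : BddBelow (f '' s)) {ε : ℝ} (hε : 0 < ε) : ∃ y ∈ s, ∀ z ∈ s, f y ≤ f z + ε := by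
  obtain ⟨_, ⟨y, hy, rfl⟩, hlt⟩ :=
    exists_lt_of_csInf_lt (hs.image f) (lt_add_of_pos_right (sInf (f '' s)) hε)
  exact ⟨y, hy, fun z hz => by linarith [csInf_le hbdd (mem_image_of_mem f hz)]⟩

theorem exists_iInter_eq_singleton_of_subset_closedBall {X : Type*} [MetricSpace X]
    [CompleteSpace X] {s : ℕ → Set X} {c : ℕ → X} {r : ℕ → ℝ} (hanti : Antitone s)
    (hclosed : ∀ n, IsClosed (s n)) (hc : ∀ n, c n ∈ s n)
    (hr : ∀ n, s n ⊆ Metric.closedBall (c n) (r n)) (hr0 : Tendsto r atTop (𝓝 0)) :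
    ∃ v, ⋂ n, s n = {v} := by
  have hcauchy : CauchySeq c := cauchySeq_of_le_tendsto_0' r
    (fun n m hnm => by rw [dist_comm]; exact hr n (hanti hnm (hc m))) hr0
  obtain ⟨v, hv⟩ := cauchySeq_tendsto_of_complete hcauchy
  refine ⟨v, eq_singleton_iff_unique_mem.2 ⟨mem_iInter.2 fun n => ?_, fun z hz => ?_⟩⟩
  · exact (hclosed n).mem_of_tendsto hv (eventually_atTop.2 ⟨n, fun m hm => hanti hm (hc m)⟩)
  · have hcz : Tendsto c atTop (𝓝 z) := tendsto_iff_dist_tendsto_zero.2 <|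
      squeeze_zero (fun _ => dist_nonneg)
        (fun n => by rw [dist_comm]; exact hr n (mem_iInter.1 hz n)) hr0
    exact tendsto_nhds_unique hcz hv

section Ekeland

variable {X : Type*} [MetricSpace X] {f : X → ℝ} {δ : ℝ}

def ekelandSet (f : X → ℝ) (δ : ℝ) (x : X) : Set X := {z | f z + δ * dist z x ≤ f x}

theorem self_mem_ekelandSet (x : X) : x ∈ ekelandSet f δ x := by
  simp [ekelandSet]

theorem ekelandSet_subset_of_mem (hδ : 0 ≤ δ) {x y : X} (hy : y ∈ ekelandSet f δ x) :
    ekelandSet f δ y ⊆ ekelandSet f δ x := fun z hz => by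
  simp only [ekelandSet, mem_ofPred_eq] at hy hz ⊢
  linarith [mul_le_mul_of_nonneg_left (dist_triangle z y x) hδ]

theorem LowerSemicontinuous.isClosed_ekelandSet (hf : LowerSemicontinuous f) (x : X) :
    IsClosed (ekelandSet f δ x) :=
  (hf.add (continuous_const.mul (continuous_id.dist continuous_const)).lowerSemicontinuous)
    |>.isClosed_preimage (f x)

theorem dist_le_of_mem_ekelandSet (hδ : 0 ≤ δ) {ε : ℝ} {x y z : X}
    (hy : y ∈ ekelandSet f δ x) (hy_min : ∀ z ∈ ekelandSet f δ x, f y ≤ f z + ε)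
    (hz : z ∈ ekelandSet f δ y) : δ * dist z y ≤ ε := by
  have := hy_min z (ekelandSet_subset_of_mem hδ hy hz)
  simp only [ekelandSet, mem_ofPred_eq] at hz
  linarith

theorem LowerSemicontinuous.exists_ekeland_point [CompleteSpace X] (hf : LowerSemicontinuous f)
    (hbdd : BddBelow (range f)) (hδ : 0 < δ) (x : X) :
    ∃ v ∈ ekelandSet f δ x, ∀ z, f v ≤ f z + δ * dist z v := by
  have hstep (n : ℕ) (x : X) : ∃ y ∈ ekelandSet f δ x,
      ∀ z ∈ ekelandSet f δ x, f y ≤ f z + 1 / (n + 1) :=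
    Set.Nonempty.exists_forall_le_add ⟨x, self_mem_ekelandSet x⟩
      (hbdd.mono (image_subset_range _ _)) Nat.one_div_pos_of_nat
  choose next hnext_mem hnext_le using hstep
  let u : ℕ → X := fun n => Nat.rec x (fun n y => next n y) n
  have hu_succ (n : ℕ) : u (n + 1) ∈ ekelandSet f δ (u n) := hnext_mem n (u n)
  obtain ⟨v, hv⟩ := exists_iInter_eq_singleton_of_subset_closedBall
    (s := fun n => ekelandSet f δ (u (n + 1))) (r := fun n => 1 / (n + 1) / δ)
    (antitone_nat_of_succ_le fun n => ekelandSet_subset_of_mem hδ.le (hu_succ (n + 1)))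
    (fun _ => hf.isClosed_ekelandSet _) (fun _ => self_mem_ekelandSet _)
    (fun n z hz => by
      rw [Metric.mem_closedBall, le_div_iff₀ hδ, mul_comm]
      exact dist_le_of_mem_ekelandSet hδ.le (hu_succ n) (hnext_le n (u n)) hz)
    (by simpa using tendsto_one_div_add_atTop_nhds_zero_nat.div_const δ)
  have hv_mem : ∀ n, v ∈ ekelandSet f δ (u (n + 1)) := mem_iInter.1 (hv ▸ mem_singleton v)
  refine ⟨v, ekelandSet_subset_of_mem hδ.le (hu_succ 0) (hv_mem 0), fun z => ?_⟩
  by_contra! hz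
  -- a strict descent from `v` would lie in every set of the nest, which only contains `v`
  have hz_mem : z ∈ ⋂ n, ekelandSet f δ (u (n + 1)) :=
    mem_iInter.2 fun n => ekelandSet_subset_of_mem hδ.le (hv_mem n) hz.le
  rw [hv, mem_singleton_iff] at hz_mem
  subst hz_mem
  simp at hz

end Ekeland

section Subdifferential

variable {Y : Type*} [NormedAddCommGroup Y] [NormedSpace ℝ Y]

theorem ContinuousLinearMap.prod_apply_eq {F : Y × ℝ →L[ℝ] ℝ} (z : Y) (t : ℝ) :
    F (z, t) = F.comp (.inl ℝ Y ℝ) z + F (0, 1) * t := by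
  have hzt : ((z, t) : Y × ℝ) = (z, 0) + t • (0, 1) := by simp
  rw [hzt, map_add, map_smul, smul_eq_mul, mul_comm]
  rfl

theorem ContinuousLinearMap.norm_le_of_forall_apply_le {f : Y →L[ℝ] ℝ} {δ : ℝ} (hδ : 0 ≤ δ)
    (hf : ∀ w, f w ≤ δ * ‖w‖) : ‖f‖ ≤ δ := by
  refine f.opNorm_le_bound hδ fun w => abs_le.2 ⟨?_, hf w⟩
  linarith [show -f w ≤ δ * ‖w‖ by simpa using hf (-w)]

def subdifferential (g : Y → ℝ) (v : Y) : Set (Y →L[ℝ] ℝ) :=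
  {y | ∀ z, y (z - v) ≤ g z - g v}

theorem exists_mem_subdifferential_norm_le {g : Y → ℝ} (hconv : ConvexOn ℝ univ g)
    (hcont : Continuous g) {δ : ℝ} (hδ : 0 ≤ δ) {v : Y}
    (hmin : ∀ z, g v ≤ g z + δ * dist z v) : ∃ y ∈ subdifferential g v, ‖y‖ ≤ δ := by
  have hconcave : ConcaveOn ℝ univ (fun z => g v - δ * dist z v) :=
    (concaveOn_const _ convex_univ).sub ((convexOn_univ_dist v).smul hδ)
  have hopen : IsOpen {p : Y × ℝ | p.1 ∈ univ ∧ g p.1 < p.2} := by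
    simpa only [mem_univ, true_and, Function.comp_apply] using
      isOpen_lt (hcont.comp continuous_fst) continuous_snd
  have hdisj : Disjoint {p : Y × ℝ | p.1 ∈ univ ∧ g p.1 < p.2}
      {p : Y × ℝ | p.1 ∈ univ ∧ p.2 ≤ g v - δ * dist p.1 v} :=
    disjoint_left.2 fun p hA hB => (hmin p.1).not_gt (by linarith [hA.2, hB.2])
  obtain ⟨F, u, hFA, hFB⟩ := geometric_hahn_banach_open hconv.convex_strict_epigraph hopen
    hconcave.convex_hypograph hdisj
  set φ := F.comp (.inl ℝ Y ℝ)
  set c := F (0, 1)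
  have hF (z : Y) (t : ℝ) : F (z, t) = φ z + c * t := F.prod_apply_eq z t
  have hA (z : Y) (t : ℝ) (ht : g z < t) : φ z + c * t < u := hF z t ▸ hFA _ ⟨mem_univ _, ht⟩
  have hB (z : Y) : u ≤ φ z + c * (g v - δ * dist z v) := hF _ _ ▸ hFB _ ⟨mem_univ _, le_rfl⟩
  have hc : c < 0 := by
    have h₁ := hA v (g v + 1) (by linarith)
    have h₂ := hB v
    rw [dist_self, mul_zero, sub_zero] at h₂
    linarith
  have hle (z : Y) : φ z + c * g z ≤ u := by
    refine le_of_forall_pos_lt_add fun ε hε => ?_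
    have hcε : c * (ε / -c) = -ε := by field_simp [hc.ne]
    linarith [hA z (g z + ε / -c) (by linarith [div_pos hε (neg_pos.2 hc)]),
      mul_add c (g z) (ε / -c)]
  have hu : u = φ v + c * g v := le_antisymm (by simpa using hB v) (hle v)
  refine ⟨(-c)⁻¹ • φ, fun z => ?_, ?_⟩
  · rw [smul_apply, map_sub, smul_eq_mul, inv_mul_le_iff₀ (neg_pos.2 hc)]
    linarith [hle z]
  · refine ContinuousLinearMap.norm_le_of_forall_apply_le hδ fun w => ?_
    rw [smul_apply, smul_eq_mul, inv_mul_le_iff₀ (neg_pos.2 hc)]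
    have := hB (v - w)
    rw [dist_eq_norm, sub_sub_cancel_left, norm_neg, map_sub] at this
    linarith

theorem exists_mem_subdifferential_of_lt_iInf_add [CompleteSpace Y] {g : Y → ℝ}
    (hconv : ConvexOn ℝ univ g) (hcont : Continuous g) (hbdd : BddBelow (range g)) {ε : ℝ}
    (hε : 0 < ε) : ∃ v, ∃ y ∈ subdifferential g v,
      g v < (⨅ z, g z) + ε ∧ ‖y‖ ≤ ε ∧ |y v| ≤ 2 * ε := by
  obtain ⟨x, hx⟩ := exists_lt_of_ciInf_lt (lt_add_of_pos_right (⨅ z, g z) hε)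
  have hpos : 0 < ‖x‖ + 1 := by positivity
  have hδ : 0 < ε / (‖x‖ + 1) := div_pos hε hpos
  obtain ⟨v, hv_desc, hv_min⟩ := hcont.lowerSemicontinuous.exists_ekeland_point hbdd hδ x
  obtain ⟨y, hy, hy_norm⟩ := exists_mem_subdifferential_norm_le hconv hcont hδ.le hv_min
  have hvx : g v + ε / (‖x‖ + 1) * ‖v - x‖ ≤ g x := by
    rw [← dist_eq_norm]; exact hv_desc
  have hgv : g v ≤ g x := by linarith [mul_nonneg hδ.le (norm_nonneg (v - x))]
  have hv_near : ‖v - x‖ ≤ ‖x‖ + 1 := by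
    refine le_of_mul_le_mul_left ?_ hδ
    rw [div_mul_cancel₀ _ hpos.ne']
    linarith [ciInf_le hbdd v]
  have hv_norm : ‖v‖ ≤ 2 * (‖x‖ + 1) := by
    linarith [norm_le_norm_add_norm_sub' v x, norm_sub_rev v x]
  have hy_norm' : ‖y‖ ≤ ε := hy_norm.trans (div_le_self hε.le (by linarith [norm_nonneg x]))
  refine ⟨v, y, hy, hgv.trans_lt hx, hy_norm', ?_⟩
  calc |y v| ≤ ‖y‖ * ‖v‖ := y.le_opNorm v
    _ ≤ ε / (‖x‖ + 1) * (2 * (‖x‖ + 1)) := by gcongr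
    _ = 2 * ε := by field_simp

end Subdifferential

/-- Ekeland-type lemma: for a convex continuous bounded-below function on a Banach
space, there are sequences `v k` and subgradients `y k ∈ ∂g(v k)` with
`g (v k) → inf g`, `|⟨y k, v k⟩| → 0` and `‖y k‖ → 0`. -/
theorem ekeland_subgradient_sequences {Y : Type*} [NormedAddCommGroup Y] [NormedSpace ℝ Y]
    [CompleteSpace Y] (g : Y → ℝ) (hconv : ConvexOn ℝ Set.univ g) (hcont : Continuous g)
    (hbdd : BddBelow (Set.range g)) :
    ∃ (v : ℕ → Y) (y : ℕ → Y →L[ℝ] ℝ),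
      Tendsto (fun k => g (v k)) atTop (𝓝 (⨅ z : Y, g z)) ∧
      (∀ k, ∀ z : Y, (y k) (z - v k) ≤ g z - g (v k)) ∧
      Tendsto (fun k => |(y k) (v k)|) atTop (𝓝 0) ∧
      Tendsto (fun k => ‖y k‖) atTop (𝓝 0) := by
  choose v y hy hgv hy_norm hyv using fun k : ℕ =>
    exists_mem_subdifferential_of_lt_iInf_add hconv hcont hbdd (Nat.one_div_pos_of_nat (n := k))
  have hε : Tendsto (fun k : ℕ => 1 / ((k : ℝ) + 1)) atTop (𝓝 0) :=
    tendsto_one_div_add_atTop_nhds_zero_nat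
  refine ⟨v, y, ?_, hy, ?_, squeeze_zero (fun _ => norm_nonneg _) hy_norm hε⟩
  · exact tendsto_of_tendsto_of_tendsto_of_le_of_le tendsto_const_nhds
      (by simpa using hε.const_add (⨅ z, g z)) (fun k => ciInf_le hbdd _) (fun k => (hgv k).le)
  · exact squeeze_zero (fun _ => abs_nonneg _) hyv (by simpa using hε.const_mul 2)
end

section
/- Let X and Y be normed spaces, and let G ⊆ X* × Y* be nonempty, convex, and weak*-compact. Fix ū ∈ X and define g : Y → ℝ by g(v) = σ_G(ū, v) = sup_{(x*,y*)∈G} (⟨x*, ū⟩ + ⟨y*, v⟩). Then g is a continuous convex function and, for every v̄ ∈ Y, the Fenchel subdifferential of g at v̄ equals the projection onto Y* of the set of maximizers: ∂g(v̄) = {y* ∈ Y* : ∃ x* ∈ X*, (x*, y*) ∈ G and ⟨x*, ū⟩ + ⟨y*, v̄⟩ = g(v̄)}. -/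
/-!
Each `p ∈ G` gives an affine minorant `v ↦ p.1 ū + p.2 v` of `g`, and by weak*-compactness the
supremum is attained; this gives convexity and the inclusion `⊇`.

Continuity needs a uniform bound on `‖p.2‖`, obtained without completeness of `Y`: Baire's
theorem on the compact space `snd '' G` bounds the norms on a relatively open piece of it, and a
homothety towards a point of that piece, which stays in the set by convexity, spreads the bound
everywhere. Then `g` is Lipschitz.

For `⊆`, suppose `y*` is not the `Y*`-part of a maximizer at `v̄`. Then the vertical ray above
`(y*, g v̄ - y* v̄)` misses the compact convex set `{(p.2, p.1 ū) : p ∈ G} ⊆ Y* × ℝ`, and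
Hahn–Banach separates them. Weak*-continuous functionals on `Y*` are evaluations at points of `Y`,
so the separating functional is `(y', s) ↦ y' w + l s` with `l ≥ 0`, and the point `v = v̄ + w`
(if `l = 0`) or `v = w / l` (if `l > 0`) violates the subgradient inequality.
-/

open Topology

theorem IsCompact.exists_forall_add_smul_sub_mem {E : Type*} [AddCommGroup E] [Module ℝ E]
    [TopologicalSpace E] [IsTopologicalAddGroup E] [ContinuousSMul ℝ E] {K : Set E}
    (hK : IsCompact K) {x : E} {V : Set E} (hV : V ∈ 𝓝 x) :
    ∃ t ∈ Set.Ioc (0 : ℝ) 1, ∀ y ∈ K, x + t • (y - x) ∈ V := by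
  have hsmall : ∀ᶠ t in 𝓝 (0 : ℝ), ∀ y ∈ K, x + t • (y - x) ∈ V :=
    hK.eventually_forall_of_forall_eventually fun y _ => by
      have hcont : Continuous fun z : ℝ × E => x + z.1 • (z.2 - x) := by fun_prop
      exact hcont.tendsto (0, y) (by simpa using hV)
  exact ((hsmall.filter_mono nhdsWithin_le_nhds).and (Ioc_mem_nhdsGT one_pos)).exists.imp
    fun t ht => ⟨ht.2, ht.1⟩

namespace WeakDual

variable {E : Type*} [NormedAddCommGroup E] [NormedSpace ℝ E]

instance instLocallyConvexSpace : LocallyConvexSpace ℝ (WeakDual ℝ E) :=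
  WeakBilin.locallyConvexSpace

theorem exists_eq_apply (f : WeakDual ℝ E →L[ℝ] ℝ) :
    ∃ x : E, ∀ x' : WeakDual ℝ E, f x' = x' x :=
  (LinearMap.dualEmbedding_surjective (topDualPairing ℝ E) f).imp
    fun _ hx x' => by rw [← hx]; rfl

theorem exists_eventually_norm_le_of_isCompact {K : Set (WeakDual ℝ E)} (hK : IsCompact K)
    (hne : K.Nonempty) :
    ∃ x₀ ∈ K, ∃ r : ℝ, ∀ᶠ x' in 𝓝[K] x₀, ‖toStrongDual x'‖ ≤ r := by
  have : CompactSpace K := isCompact_iff_compactSpace.mp hK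
  have : Nonempty K := hne.to_subtype
  have hclosed (n : ℕ) : IsClosed {x' : K | ‖toStrongDual (x' : WeakDual ℝ E)‖ ≤ n} := by
    simpa [Set.preimage] using
      (isClosed_closedBall (0 : StrongDual ℝ E) n).preimage continuous_subtype_val
  have hcover : ⋃ n : ℕ, {x' : K | ‖toStrongDual (x' : WeakDual ℝ E)‖ ≤ n} = Set.univ :=
    Set.eq_univ_of_forall fun x' =>
      Set.mem_iUnion.mpr ⟨_, Nat.le_ceil ‖toStrongDual (x' : WeakDual ℝ E)‖⟩
  obtain ⟨n, x₀, hx₀⟩ := nonempty_interior_of_iUnion_of_closed hclosed hcover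
  refine ⟨x₀, x₀.2, n, ?_⟩
  filter_upwards [mem_nhds_subtype_iff_nhdsWithin.mp (mem_interior_iff_mem_nhds.mp hx₀)]
  rintro _ ⟨x', hx', rfl⟩
  exact hx'

theorem exists_norm_le_of_isCompact_of_convex {K : Set (WeakDual ℝ E)} (hK : IsCompact K)
    (hconv : Convex ℝ K) : ∃ M : ℝ, ∀ x' ∈ K, ‖toStrongDual x'‖ ≤ M := by
  rcases K.eq_empty_or_nonempty with rfl | hne
  · exact ⟨0, by simp⟩
  obtain ⟨x₀, hx₀, r, hr⟩ := exists_eventually_norm_le_of_isCompact hK hne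
  obtain ⟨V, hV, hVK⟩ := mem_nhdsWithin_iff_exists_mem_nhds_inter.mp hr
  obtain ⟨t, ⟨ht₀, ht₁⟩, htV⟩ := hK.exists_forall_add_smul_sub_mem hV
  refine ⟨r + 2 * r / t, fun x' hx' => ?_⟩
  have hx₀r : ‖toStrongDual x₀‖ ≤ r := hVK ⟨mem_of_mem_nhds hV, hx₀⟩
  have hmid : ‖toStrongDual (x₀ + t • (x' - x₀))‖ ≤ r :=
    hVK ⟨htV x' hx', hconv.add_smul_sub_mem hx₀ hx' ⟨ht₀.le, ht₁⟩⟩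
  have hdiff : t * ‖toStrongDual (x' - x₀)‖ ≤ 2 * r := by
    calc t * ‖toStrongDual (x' - x₀)‖
        = ‖toStrongDual (x₀ + t • (x' - x₀)) - toStrongDual x₀‖ := by
          rw [map_add, add_sub_cancel_left, map_smul, norm_smul, Real.norm_of_nonneg ht₀.le]
      _ ≤ 2 * r := by
          linarith [norm_sub_le (toStrongDual (x₀ + t • (x' - x₀))) (toStrongDual x₀)]
  calc ‖toStrongDual x'‖ = ‖toStrongDual x₀ + toStrongDual (x' - x₀)‖ := by
        rw [map_sub, add_sub_cancel]
    _ ≤ ‖toStrongDual x₀‖ + ‖toStrongDual (x' - x₀)‖ := norm_add_le _ _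
    _ ≤ r + 2 * r / t := add_le_add hx₀r ((le_div_iff₀' ht₀).mpr hdiff)

theorem exists_apply_add_mul_lt_of_forall_notMem {K : Set (WeakDual ℝ E × ℝ)}
    (hK : IsCompact K) (hconv : Convex ℝ K) {y : WeakDual ℝ E} {c : ℝ}
    (hyc : ∀ a ≥ c, (y, a) ∉ K) :
    ∃ x : E, ∃ l ≥ (0 : ℝ), ∀ q ∈ K, q.1 x + l * q.2 < y x + l * c := by
  have hdisj : Disjoint K ({y} ×ˢ Set.Ici c) := Set.disjoint_left.mpr
    fun q hq ⟨hq₁, hq₂⟩ => hyc q.2 hq₂ (by rwa [← Set.mem_singleton_iff.mp hq₁])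
  obtain ⟨f, s, t, hfK, hst, hft⟩ := geometric_hahn_banach_compact_closed hconv hK
    (convex_singleton y |>.prod (convex_Ici c)) (isClosed_singleton.prod isClosed_Ici) hdisj
  obtain ⟨x, hx⟩ := exists_eq_apply (f.comp (ContinuousLinearMap.inl ℝ _ ℝ))
  have hf (q : WeakDual ℝ E × ℝ) : f q = q.1 x + f (0, 1) * q.2 := by
    have hq : q = (q.1, 0) + q.2 • (0, 1) := by ext <;> simp
    rw [hq, map_add, map_smul, smul_eq_mul, mul_comm]
    simp [← hx]
  have hray (a : ℝ) (ha : c ≤ a) : t < y x + f (0, 1) * a :=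
    hf (y, a) ▸ hft (y, a) ⟨rfl, ha⟩
  have hl : 0 ≤ f (0, 1) := by
    by_contra! hl
    -- far enough up the ray, `f` drops below `t`
    have := hray (c + (t - (y x + f (0, 1) * c)) / f (0, 1)) (le_add_of_nonneg_right
      (div_nonneg_of_nonpos (by linarith [hray c le_rfl]) hl.le))
    rw [mul_add, mul_div_cancel₀ _ hl.ne] at this
    linarith
  exact ⟨x, f (0, 1), hl, fun q hq => by linarith [hfK q hq, hf q, hray c le_rfl]⟩

end WeakDual

section SupportFunction

variable {X Y : Type*} [NormedAddCommGroup X] [NormedSpace ℝ X]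
  [NormedAddCommGroup Y] [NormedSpace ℝ Y] {G : Set (WeakDual ℝ X × WeakDual ℝ Y)} {u : X}

noncomputable def supportFun (G : Set (WeakDual ℝ X × WeakDual ℝ Y)) (u : X) (v : Y) : ℝ :=
  ⨆ p : G, (p : WeakDual ℝ X × WeakDual ℝ Y).1 u + (p : WeakDual ℝ X × WeakDual ℝ Y).2 v

theorem continuous_fst_apply_add_snd_apply (u : X) (v : Y) :
    Continuous fun p : WeakDual ℝ X × WeakDual ℝ Y => p.1 u + p.2 v :=
  ((WeakDual.eval_continuous u).comp continuous_fst).add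
    ((WeakDual.eval_continuous v).comp continuous_snd)

theorem exists_isMaxOn_fst_apply_add_snd_apply (hne : G.Nonempty) (hcomp : IsCompact G)
    (u : X) (v : Y) : ∃ p ∈ G, IsMaxOn (fun p => p.1 u + p.2 v) G p :=
  hcomp.exists_isMaxOn hne (continuous_fst_apply_add_snd_apply u v).continuousOn

theorem exists_supportFun_eq (hne : G.Nonempty) (hcomp : IsCompact G) (u : X) (v : Y) :
    ∃ p ∈ G, supportFun G u v = p.1 u + p.2 v :=
  (exists_isMaxOn_fst_apply_add_snd_apply hne hcomp u v).imp fun _ ⟨hp, hmax⟩ =>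
    ⟨hp, hmax.iSup_eq hp⟩

theorem fst_apply_add_snd_apply_le_supportFun (hcomp : IsCompact G) {p} (hp : p ∈ G) (v : Y) :
    p.1 u + p.2 v ≤ supportFun G u v := by
  obtain ⟨q, hq, hmax⟩ := exists_isMaxOn_fst_apply_add_snd_apply ⟨p, hp⟩ hcomp u v
  rw [supportFun, hmax.iSup_eq hq]
  exact hmax hp

theorem convexOn_supportFun (hne : G.Nonempty) (hcomp : IsCompact G) :
    ConvexOn ℝ Set.univ (supportFun G u) := by
  refine ⟨convex_univ, fun v _ w _ a b ha hb hab => ?_⟩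
  obtain ⟨p, hp, hpeq⟩ := exists_supportFun_eq hne hcomp u (a • v + b • w)
  calc supportFun G u (a • v + b • w)
      = a * (p.1 u + p.2 v) + b * (p.1 u + p.2 w) := by
        rw [hpeq, map_add, map_smul, map_smul, smul_eq_mul, smul_eq_mul]
        linear_combination (-p.1 u) * hab
    _ ≤ a * supportFun G u v + b * supportFun G u w := by
        gcongr <;> exact fst_apply_add_snd_apply_le_supportFun hcomp hp _

theorem lipschitzWith_supportFun (hne : G.Nonempty) (hcomp : IsCompact G) {M : ℝ}
    (hM : ∀ p ∈ G, ‖WeakDual.toStrongDual p.2‖ ≤ M) :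
    LipschitzWith M.toNNReal (supportFun G u) := by
  refine LipschitzWith.of_le_add_mul' M fun v w => ?_
  obtain ⟨p, hp, hpeq⟩ := exists_supportFun_eq hne hcomp u v
  have hlip : p.2 (v - w) ≤ M * dist v w := by
    grw [← hM p hp, dist_eq_norm, ← (WeakDual.toStrongDual p.2).le_opNorm (v - w)]
    exact le_abs_self _
  calc supportFun G u v = p.1 u + p.2 w + p.2 (v - w) := by rw [hpeq, map_sub]; ring
    _ ≤ supportFun G u w + M * dist v w := by
        grw [fst_apply_add_snd_apply_le_supportFun hcomp hp w, hlip]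

theorem continuous_supportFun (hne : G.Nonempty) (hconv : Convex ℝ G) (hcomp : IsCompact G) :
    Continuous (supportFun G u) := by
  obtain ⟨M, hM⟩ := WeakDual.exists_norm_le_of_isCompact_of_convex (hcomp.image continuous_snd)
    (hconv.linear_image (LinearMap.snd ℝ _ _))
  exact (lipschitzWith_supportFun hne hcomp fun p hp => hM _ ⟨p, hp, rfl⟩).continuous

theorem exists_supportFun_lt_of_forall_lt (hne : G.Nonempty) (hconv : Convex ℝ G)
    (hcomp : IsCompact G) {v₀ : Y} {y : WeakDual ℝ Y}
    (hy : ∀ x, (x, y) ∈ G → x u + y v₀ < supportFun G u v₀) :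
    ∃ v, supportFun G u v < supportFun G u v₀ + y (v - v₀) := by
  set π : WeakDual ℝ X × WeakDual ℝ Y → WeakDual ℝ Y × ℝ := fun p => (p.2, p.1 u)
  have hπG : ∀ a ≥ supportFun G u v₀ - y v₀, (y, a) ∉ π '' G := by
    rintro a ha ⟨⟨x, y'⟩, hp, hpa⟩
    obtain ⟨rfl, rfl⟩ := Prod.ext_iff.mp hpa
    linarith [hy x hp]
  obtain ⟨w, l, hl, hsep⟩ := WeakDual.exists_apply_add_mul_lt_of_forall_notMem
    (hcomp.image (continuous_snd.prodMk ((WeakDual.eval_continuous u).comp continuous_fst)))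
    (hconv.is_linear_image ⟨fun _ _ => rfl, fun _ _ => rfl⟩) hπG
  have hsepG (p) (hp : p ∈ G) : p.2 w + l * p.1 u < y w + l * (supportFun G u v₀ - y v₀) :=
    hsep (π p) ⟨p, hp, rfl⟩
  obtain ⟨v, hv⟩ : ∃ v, ∀ p ∈ G, p.1 u + p.2 v < supportFun G u v₀ + y (v - v₀) := by
    rcases hl.eq_or_lt with rfl | hl
    · refine ⟨v₀ + w, fun p hp => ?_⟩
      rw [map_add, add_sub_cancel_left, ← add_assoc]
      linarith [hsepG p hp, fst_apply_add_snd_apply_le_supportFun (u := u) hcomp hp v₀]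
    · refine ⟨l⁻¹ • w, fun p hp => ?_⟩
      rw [map_sub, map_smul, map_smul, smul_eq_mul, smul_eq_mul]
      have := hsepG p hp
      field_simp
      linarith
  obtain ⟨p, hp, hpeq⟩ := exists_supportFun_eq hne hcomp u v
  exact ⟨v, hpeq ▸ hv p hp⟩

theorem exists_mem_eq_supportFun_of_mem_subdiff (hne : G.Nonempty) (hconv : Convex ℝ G)
    (hcomp : IsCompact G) {v₀ : Y} {y : WeakDual ℝ Y}
    (hy : ∀ v, y (v - v₀) ≤ supportFun G u v - supportFun G u v₀) :
    ∃ x, (x, y) ∈ G ∧ x u + y v₀ = supportFun G u v₀ := by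
  by_contra! hno
  obtain ⟨v, hv⟩ := exists_supportFun_lt_of_forall_lt hne hconv hcomp fun x hx =>
    (fst_apply_add_snd_apply_le_supportFun hcomp hx v₀).lt_of_ne (hno x hx)
  linarith [hy v]

theorem mem_subdiff_of_mem_eq_supportFun (hcomp : IsCompact G) {v₀ : Y} {x : WeakDual ℝ X}
    {y : WeakDual ℝ Y} (hxy : (x, y) ∈ G) (hmax : x u + y v₀ = supportFun G u v₀) (v : Y) :
    y (v - v₀) ≤ supportFun G u v - supportFun G u v₀ := by
  rw [map_sub]
  linarith [fst_apply_add_snd_apply_le_supportFun (u := u) hcomp hxy v]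

end SupportFunction

/-- For `G ⊆ X* × Y*` nonempty, convex and weak*-compact and fixed `ū ∈ X`, the
function `g(v) = σ_G(ū, v)` is continuous and convex, and its Fenchel subdifferential
at every `v̄` equals the projection onto `Y*` of the set of maximizers of the support
function at `(ū, v̄)`. -/
theorem subdiff_support_projection {X Y : Type*} [NormedAddCommGroup X] [NormedSpace ℝ X]
    [NormedAddCommGroup Y] [NormedSpace ℝ Y]
    (G : Set (WeakDual ℝ X × WeakDual ℝ Y)) (hne : G.Nonempty) (hconv : Convex ℝ G)
    (hcomp : IsCompact G) (ubar : X) :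
    Continuous (fun v : Y => ⨆ p : G, ((p : WeakDual ℝ X × WeakDual ℝ Y).1 ubar +
        (p : WeakDual ℝ X × WeakDual ℝ Y).2 v)) ∧
    ConvexOn ℝ Set.univ (fun v : Y => ⨆ p : G, ((p : WeakDual ℝ X × WeakDual ℝ Y).1 ubar +
        (p : WeakDual ℝ X × WeakDual ℝ Y).2 v)) ∧
    ∀ vbar : Y,
      {ystar : WeakDual ℝ Y | ∀ v : Y,
          ystar (v - vbar) ≤
            (⨆ p : G, ((p : WeakDual ℝ X × WeakDual ℝ Y).1 ubar +
              (p : WeakDual ℝ X × WeakDual ℝ Y).2 v)) -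
            (⨆ p : G, ((p : WeakDual ℝ X × WeakDual ℝ Y).1 ubar +
              (p : WeakDual ℝ X × WeakDual ℝ Y).2 vbar))} =
      {ystar : WeakDual ℝ Y | ∃ xstar : WeakDual ℝ X, (xstar, ystar) ∈ G ∧
          xstar ubar + ystar vbar =
            ⨆ p : G, ((p : WeakDual ℝ X × WeakDual ℝ Y).1 ubar +
              (p : WeakDual ℝ X × WeakDual ℝ Y).2 vbar)} := by
  refine ⟨continuous_supportFun hne hconv hcomp, convexOn_supportFun hne hcomp, fun vbar => ?_⟩
  ext ystar
  exact ⟨exists_mem_eq_supportFun_of_mem_subdiff hne hconv hcomp,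
    fun ⟨_, hxy, hmax⟩ => mem_subdiff_of_mem_eq_supportFun hcomp hxy hmax⟩
end

section
/- Let X, Y be Banach spaces, f : X × Y → ℝ̄ locally Lipschitz at (x̄, ȳ), and φ(x) = inf_{y∈Y} f(x,y) the (unconstrained) marginal function, assumed locally Lipschitz at x̄. Suppose ȳ ∈ Y satisfies: for some sequences x_k → x̄, t_k ↓ 0 realizing φ°(x̄, u) = lim (φ(x_k + t_k u) − φ(x_k))/t_k, there are y_k ∈ S(x_k) with y_k → ȳ and ȳ ∈ S(x̄), where S(x) = {y : f(x,y) = φ(x)}. Then for every v ∈ Y, φ°(x̄, u) ≤ f°((x̄,ȳ),(u,v)); hence φ°(x̄, u) ≤ inf_{v∈Y} f°((x̄,ȳ),(u,v)). -/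
/-!
Along the realizing sequence, `φ (x_k + t_k u) ≤ f (x_k + t_k u, y_k + t_k v)` and
`φ (x_k) = f (x_k, y_k)`, so the difference quotients of `φ` are dominated by those of `f`
at `((x_k, y_k), t_k)`. These points converge in the filter defining `f°((x̄, ȳ), ·)`, and
local Lipschitz continuity of `f` keeps the quotients bounded, so the limit `φ°(x̄, u)` is at
most `f°((x̄, ȳ), (u, v))`.
-/

open Filter Topology

/-- Clarke generalized directional derivative. -/
noncomputable def clarkeDeriv {Z : Type*} [NormedAddCommGroup Z] [NormedSpace ℝ Z]
    (h : Z → ℝ) (z : Z) (w : Z) : ℝ :=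
  Filter.limsup (fun p : Z × ℝ => (h (p.1 + p.2 • w) - h p.1) / p.2)
    ((𝓝 z) ×ˢ (𝓝[>] (0 : ℝ)))

section DiffQuotient

variable {Z : Type*} [NormedAddCommGroup Z] [NormedSpace ℝ Z]

noncomputable def diffQuotient (h : Z → ℝ) (w : Z) (p : Z × ℝ) : ℝ :=
  (h (p.1 + p.2 • w) - h p.1) / p.2

theorem clarkeDeriv_eq_limsup_diffQuotient (h : Z → ℝ) (z w : Z) :
    clarkeDeriv h z w = limsup (diffQuotient h w) (𝓝 z ×ˢ 𝓝[>] (0 : ℝ)) :=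
  rfl

theorem tendsto_add_smul_nhds_prod_nhdsGT (z w : Z) :
    Tendsto (fun p : Z × ℝ => p.1 + p.2 • w) (𝓝 z ×ˢ 𝓝[>] (0 : ℝ)) (𝓝 z) := by
  have hfst : Tendsto (fun p : Z × ℝ => p.1) (𝓝 z ×ˢ 𝓝[>] (0 : ℝ)) (𝓝 z) := tendsto_fst
  have hsnd : Tendsto (fun p : Z × ℝ => p.2) (𝓝 z ×ˢ 𝓝[>] (0 : ℝ)) (𝓝 0) :=
    tendsto_snd.mono_right nhdsWithin_le_nhds
  simpa using hfst.add (hsnd.smul_const w)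

theorem LipschitzOnWith.abs_diffQuotient_le {h : Z → ℝ} {L : NNReal} {W : Set Z}
    (hL : LipschitzOnWith L h W) (w : Z) {p : Z × ℝ} (hp : p.1 ∈ W)
    (hpw : p.1 + p.2 • w ∈ W) (ht : 0 < p.2) :
    |diffQuotient h w p| ≤ L * ‖w‖ := by
  have hdist : dist (p.1 + p.2 • w) p.1 = p.2 * ‖w‖ := by
    rw [dist_eq_norm, add_sub_cancel_left, norm_smul, Real.norm_of_nonneg ht.le]
  have hnum : |h (p.1 + p.2 • w) - h p.1| ≤ L * (p.2 * ‖w‖) := by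
    simpa only [Real.dist_eq, hdist] using hL.dist_le_mul _ hpw _ hp
  rw [diffQuotient, abs_div, abs_of_pos ht, div_le_iff₀ ht]
  linarith

theorem LipschitzOnWith.eventually_abs_diffQuotient_le {h : Z → ℝ} {L : NNReal} {W : Set Z}
    {z : Z} (hL : LipschitzOnWith L h W) (hW : W ∈ 𝓝 z) (w : Z) :
    ∀ᶠ p in 𝓝 z ×ˢ 𝓝[>] (0 : ℝ), |diffQuotient h w p| ≤ L * ‖w‖ := by
  have hbase : ∀ᶠ p in 𝓝 z ×ˢ 𝓝[>] (0 : ℝ), p.1 ∈ W := tendsto_fst.eventually_mem hW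
  have hmoved := (tendsto_add_smul_nhds_prod_nhdsGT z w).eventually_mem hW
  have hpos : ∀ᶠ p in 𝓝 z ×ˢ 𝓝[>] (0 : ℝ), (0 : ℝ) < p.2 :=
    tendsto_snd.eventually_mem self_mem_nhdsWithin
  filter_upwards [hbase, hmoved, hpos] with p hp hpw ht
  exact hL.abs_diffQuotient_le w hp hpw ht

theorem le_clarkeDeriv_of_tendsto {ι : Type*} {l : Filter ι} [l.NeBot] {h : Z → ℝ} {z : Z}
    (hlip : ∃ (L : NNReal) (W : Set Z), W ∈ 𝓝 z ∧ LipschitzOnWith L h W) (w : Z)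
    {m : ι → Z × ℝ} (hm : Tendsto m l (𝓝 z ×ˢ 𝓝[>] (0 : ℝ)))
    {a : ι → ℝ} {c : ℝ} (ha : Tendsto a l (𝓝 c))
    (hle : ∀ᶠ i in l, a i ≤ diffQuotient h w (m i)) :
    c ≤ clarkeDeriv h z w := by
  obtain ⟨L, W, hW, hL⟩ := hlip
  have hbound := hL.eventually_abs_diffQuotient_le hW w
  have hbound_l := hm.eventually hbound
  calc c = limsup a l := ha.limsup_eq.symm
    _ ≤ limsup (diffQuotient h w ∘ m) l :=
      limsup_le_limsup hle ha.isBoundedUnder_ge.isCoboundedUnder_le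
        (isBoundedUnder_of_eventually_le (hbound_l.mono fun _ hi => (abs_le.1 hi).2))
    _ ≤ limsup (diffQuotient h w) (𝓝 z ×ˢ 𝓝[>] (0 : ℝ)) :=
      limsup_le_limsup_of_le hm
        (isBoundedUnder_of_eventually_ge
          (hbound_l.mono fun _ hi => (abs_le.1 hi).1)).isCoboundedUnder_le
        (isBoundedUnder_of_eventually_le (hbound.mono fun _ hp => (abs_le.1 hp).2))
    _ = clarkeDeriv h z w := (clarkeDeriv_eq_limsup_diffQuotient h z w).symm

end DiffQuotient

theorem diffQuotient_le_diffQuotient_of_le_marginal {X Y : Type*} [NormedAddCommGroup X]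
    [NormedSpace ℝ X] [NormedAddCommGroup Y] [NormedSpace ℝ Y] {f : X × Y → ℝ} {φ : X → ℝ}
    (hφf : ∀ x y, φ x ≤ f (x, y)) {x : X} {y : Y} (hy : f (x, y) ≤ φ x) (u : X) (v : Y)
    {t : ℝ} (ht : 0 < t) :
    diffQuotient φ u (x, t) ≤ diffQuotient f (u, v) ((x, y), t) := by
  have hmoved : φ (x + t • u) ≤ f (x + t • u, y + t • v) := hφf _ _
  refine div_le_div_of_nonneg_right ?_ ht.le
  change φ (x + t • u) - φ x ≤ f (x + t • u, y + t • v) - f (x, y)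
  linarith

theorem marginal_clarkeDeriv_le_general {X Y : Type*} [NormedAddCommGroup X] [NormedSpace ℝ X]
    [NormedAddCommGroup Y] [NormedSpace ℝ Y]
    (f : X × Y → ℝ) (xbar : X) (ybar : Y)
    (hflip : ∃ (L : NNReal) (W : Set (X × Y)), W ∈ 𝓝 (xbar, ybar) ∧ LipschitzOnWith L f W)
    (φ : X → ℝ) (hφ : ∀ x, IsGLB (Set.range fun y => f (x, y)) (φ x))
    (u : X) (xk : ℕ → X) (tk : ℕ → ℝ) (htkpos : ∀ k, 0 < tk k)
    (hxk : Tendsto xk atTop (𝓝 xbar)) (htk : Tendsto tk atTop (𝓝 0))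
    (hrealize : Tendsto (fun k => (φ (xk k + tk k • u) - φ (xk k)) / tk k) atTop
      (𝓝 (clarkeDeriv φ xbar u)))
    (yk : ℕ → Y) (hyk : ∀ k, f (xk k, yk k) = φ (xk k))
    (hykt : Tendsto yk atTop (𝓝 ybar)) :
    (∀ v : Y, clarkeDeriv φ xbar u ≤ clarkeDeriv f (xbar, ybar) (u, v)) ∧
    clarkeDeriv φ xbar u ≤ ⨅ v : Y, clarkeDeriv f (xbar, ybar) (u, v) := by
  have hφf : ∀ x y, φ x ≤ f (x, y) := fun x y => (hφ x).1 ⟨y, rfl⟩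
  have htk' : Tendsto tk atTop (𝓝[>] 0) :=
    tendsto_nhdsWithin_of_tendsto_nhds_of_eventually_within _ htk (.of_forall htkpos)
  have hpath : Tendsto (fun k => ((xk k, yk k), tk k)) atTop
      (𝓝 (xbar, ybar) ×ˢ 𝓝[>] (0 : ℝ)) :=
    (hxk.prodMk_nhds hykt).prodMk htk'
  have hle : ∀ v : Y, clarkeDeriv φ xbar u ≤ clarkeDeriv f (xbar, ybar) (u, v) := fun v =>
    le_clarkeDeriv_of_tendsto hflip (u, v) hpath hrealize <| .of_forall fun k =>
      diffQuotient_le_diffQuotient_of_le_marginal hφf (hyk k).le u v (htkpos k)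
  exact ⟨hle, le_ciInf hle⟩

/-- Claim 1 of Lemma 3.6: the Clarke directional derivative of the marginal function
`φ(x) = inf_y f(x,y)` at `x̄` in direction `u` is dominated by `f°((x̄,ȳ),(u,v))` for
every `v`, where `ȳ` is a limiting solution point. -/
theorem marginal_clarkeDeriv_le {X Y : Type*} [NormedAddCommGroup X] [NormedSpace ℝ X]
    [CompleteSpace X] [NormedAddCommGroup Y] [NormedSpace ℝ Y] [CompleteSpace Y]
    (f : X × Y → ℝ) (xbar : X) (ybar : Y)
    (hflip : ∃ (L : NNReal) (W : Set (X × Y)), W ∈ 𝓝 (xbar, ybar) ∧ LipschitzOnWith L f W)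
    (φ : X → ℝ) (hφ : ∀ x, IsGLB (Set.range fun y => f (x, y)) (φ x))
    (hφlip : ∃ (L : NNReal) (U : Set X), U ∈ 𝓝 xbar ∧ LipschitzOnWith L φ U)
    (u : X) (xk : ℕ → X) (tk : ℕ → ℝ) (htkpos : ∀ k, 0 < tk k)
    (hxk : Tendsto xk atTop (𝓝 xbar)) (htk : Tendsto tk atTop (𝓝 0))
    (hrealize : Tendsto (fun k => (φ (xk k + tk k • u) - φ (xk k)) / tk k) atTop
      (𝓝 (clarkeDeriv φ xbar u)))
    (yk : ℕ → Y) (hyk : ∀ k, f (xk k, yk k) = φ (xk k))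
    (hykt : Tendsto yk atTop (𝓝 ybar)) (hybar : f (xbar, ybar) = φ xbar) :
    (∀ v : Y, clarkeDeriv φ xbar u ≤ clarkeDeriv f (xbar, ybar) (u, v)) ∧
    clarkeDeriv φ xbar u ≤ ⨅ v : Y, clarkeDeriv f (xbar, ybar) (u, v) :=
  marginal_clarkeDeriv_le_general f xbar ybar hflip φ hφ u xk tk htkpos hxk htk hrealize yk hyk hykt
end

section
/- Let X, Y be Banach spaces and let G ⊆ X* × Y* be nonempty, convex, and weak*-compact, with σ_G its support function. Fix ū ∈ X and assume inf_{v∈Y} σ_G(ū, v) > −∞. Then there exists x̄* ∈ X* with (x̄*, 0) ∈ G and ⟨x̄*, ū⟩ = inf_{v∈Y} σ_G(ū, v); consequently, sup{⟨x*, ū⟩ : (x*, 0) ∈ G} = inf_{v∈Y} σ_G(ū, v). -/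
/-!
Every `⟨x*, ū⟩` with `(x*, 0) ∈ G` is a lower bound for `I = inf_v σ_G(ū, v)`. Conversely, the
image `K = {(⟨x*, ū⟩, y*) : (x*, y*) ∈ G}` is compact and convex in `ℝ × Y*`; if it missed the ray
`[I, ∞) × {0}`, Hahn–Banach would separate the two by a functional `(t, y*) ↦ α t + ⟨y*, w⟩` with
`α ≥ 0` (continuous functionals on the weak-* dual are evaluations), with `α t + ⟨y*, w⟩ ≤ r < α I`
on `K`. Then `(α + ε) σ_G(ū, w / (α + ε)) ≤ r + ε σ_G(ū, 0) < (α + ε) I` for small `ε > 0`,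
contradicting the definition of `I`; the perturbation `ε` takes care of `α = 0`.
-/

open Filter Topology Set

instance WeakDual.instLocallyConvexSpace_s9 {Y : Type*} [AddCommGroup Y] [TopologicalSpace Y]
    [Module ℝ Y] : LocallyConvexSpace ℝ (WeakDual ℝ Y) :=
  WeakBilin.locallyConvexSpace

theorem WeakDual.exists_eq_eval {Y : Type*} [AddCommGroup Y] [TopologicalSpace Y] [Module ℝ Y]
    (f : StrongDual ℝ (WeakDual ℝ Y)) : ∃ v : Y, ∀ φ : WeakDual ℝ Y, f φ = φ v := by
  obtain ⟨v, rfl⟩ := LinearMap.dualEmbedding_surjective (topDualPairing ℝ Y) f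
  exact ⟨v, fun _ => rfl⟩

theorem exists_forall_mul_add_le_of_disjoint_Ici_prod_zero {E : Type*} [TopologicalSpace E]
    [AddCommGroup E] [IsTopologicalAddGroup E] [Module ℝ E] [ContinuousSMul ℝ E]
    [LocallyConvexSpace ℝ E] [T1Space E] {K : Set (ℝ × E)} (hKc : Convex ℝ K) (hK : IsCompact K)
    {I : ℝ} (h : Disjoint K (Ici I ×ˢ {0})) :
    ∃ α ≥ 0, ∃ ℓ : StrongDual ℝ E, ∃ r < α * I, ∀ x ∈ K, α * x.1 + ℓ x.2 ≤ r := by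
  obtain ⟨f, u, v, hfK, huv, hfB⟩ := geometric_hahn_banach_compact_closed hKc hK
    ((convex_Ici I).prod (convex_singleton 0)) (isClosed_Ici.prod isClosed_singleton) h
  set α := f (1, 0)
  set ℓ := f.comp (ContinuousLinearMap.inr ℝ ℝ E)
  have hf : ∀ x : ℝ × E, f x = α * x.1 + ℓ x.2 := fun x =>
    calc f x = f (x.1 • (1, 0) + (0, x.2)) := congrArg f (by ext <;> simp)
      _ = α * x.1 + ℓ x.2 := by rw [map_add, map_smul, smul_eq_mul, mul_comm]; rfl
  have hB : ∀ t ≥ I, v < α * t := fun t ht => by simpa [hf] using hfB (t, 0) ⟨ht, rfl⟩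
  have hα : 0 ≤ α := by
    by_contra! hα
    have := hB (v / α) ((le_div_iff_of_neg hα).2 (by linarith [hB I le_rfl]))
    rw [mul_div_cancel₀ v hα.ne] at this
    exact this.false
  exact ⟨α, hα, ℓ, u, huv.trans (hB I le_rfl), fun x hx => (hf x ▸ hfK x hx).le⟩

section SupportFunction

variable {X Y : Type*} [AddCommGroup X] [TopologicalSpace X] [Module ℝ X]
  [AddCommGroup Y] [TopologicalSpace Y] [Module ℝ Y]

noncomputable def supportFunction (G : Set (WeakDual ℝ X × WeakDual ℝ Y)) (u : X) (v : Y) : ℝ :=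
  ⨆ p : G, (p : WeakDual ℝ X × WeakDual ℝ Y).1 u + (p : WeakDual ℝ X × WeakDual ℝ Y).2 v

variable {G : Set (WeakDual ℝ X × WeakDual ℝ Y)} {u : X}

theorem le_supportFunction (hG : IsCompact G) {p : WeakDual ℝ X × WeakDual ℝ Y} (hp : p ∈ G)
    (v : Y) : p.1 u + p.2 v ≤ supportFunction G u v := by
  have hcont : Continuous fun p : WeakDual ℝ X × WeakDual ℝ Y => p.1 u + p.2 v :=
    ((WeakDual.eval_continuous u).comp continuous_fst).add
      ((WeakDual.eval_continuous v).comp continuous_snd)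
  refine le_ciSup (f := fun p : G => (p : WeakDual ℝ X × WeakDual ℝ Y).1 u +
    (p : WeakDual ℝ X × WeakDual ℝ Y).2 v) ?_ ⟨p, hp⟩
  simpa only [image_eq_range] using (hG.image hcont).bddAbove

theorem supportFunction_le (hG : G.Nonempty) {v : Y} {r : ℝ}
    (h : ∀ p ∈ G, p.1 u + p.2 v ≤ r) : supportFunction G u v ≤ r :=
  have := hG.to_subtype
  ciSup_le fun p => h p p.2

theorem mul_le_of_forall_le_supportFunction (hG : IsCompact G) (hne : G.Nonempty) {I α r : ℝ}
    (hI : ∀ v, I ≤ supportFunction G u v) (hα : 0 ≤ α) {w : Y}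
    (h : ∀ p ∈ G, α * p.1 u + p.2 w ≤ r) : α * I ≤ r := by
  set M := supportFunction G u 0
  have hM : ∀ p ∈ G, p.1 u ≤ M := fun p hp => by simpa using le_supportFunction hG hp 0
  have hbound : ∀ ε > 0, α * I ≤ r + ε * (M - I) := by
    intro ε hε
    have hβ : 0 < α + ε := by linarith
    have hσ : supportFunction G u ((α + ε)⁻¹ • w) ≤ (α + ε)⁻¹ * (r + ε * M) := by
      refine supportFunction_le hne fun p hp => ?_
      rw [map_smul, smul_eq_mul, le_inv_mul_iff₀ hβ, mul_add, ← mul_assoc,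
        mul_inv_cancel₀ hβ.ne', one_mul]
      nlinarith [h p hp, hM p hp]
    have := (le_inv_mul_iff₀ hβ).1 ((hI _).trans hσ)
    linarith
  have hlim : Tendsto (fun ε : ℝ => r + ε * (M - I)) (𝓝[>] 0) (𝓝 r) :=
    tendsto_nhdsWithin_of_tendsto_nhds (Continuous.tendsto' (by fun_prop) 0 r (by simp))
  exact ge_of_tendsto hlim (eventually_nhdsWithin_of_forall hbound)

theorem exists_prod_zero_mem_of_forall_le_supportFunction (hconv : Convex ℝ G)
    (hG : IsCompact G) (hne : G.Nonempty) {I : ℝ} (hI : ∀ v, I ≤ supportFunction G u v) :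
    ∃ x : WeakDual ℝ X, (x, 0) ∈ G ∧ I ≤ x u := by
  by_contra! hslice
  let T : WeakDual ℝ X × WeakDual ℝ Y → ℝ × WeakDual ℝ Y := fun p => (p.1 u, p.2)
  have hT : IsLinearMap ℝ T := ⟨fun _ _ => rfl, fun _ _ => rfl⟩
  have hTcont : Continuous T :=
    ((WeakDual.eval_continuous u).comp continuous_fst).prodMk continuous_snd
  have hdisj : Disjoint (T '' G) (Ici I ×ˢ {0}) := by
    rw [disjoint_left]
    rintro _ ⟨p, hp, rfl⟩ ⟨hI, h0 : p.2 = 0⟩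
    exact (hslice p.1 (h0 ▸ hp)).not_ge hI
  obtain ⟨α, hα, ℓ, r, hr, hK⟩ := exists_forall_mul_add_le_of_disjoint_Ici_prod_zero
    (hconv.is_linear_image hT) (hG.image hTcont) hdisj
  obtain ⟨w, hw⟩ := WeakDual.exists_eq_eval ℓ
  refine hr.not_ge (mul_le_of_forall_le_supportFunction hG hne hI hα (w := w) fun p hp => ?_)
  simpa only [hw] using hK (T p) (mem_image_of_mem T hp)

end SupportFunction

theorem slice_sup_eq_inf_support_general {X Y : Type*} [NormedAddCommGroup X] [NormedSpace ℝ X]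
    [NormedAddCommGroup Y] [NormedSpace ℝ Y]
    (G : Set (WeakDual ℝ X × WeakDual ℝ Y)) (hne : G.Nonempty) (hconv : Convex ℝ G)
    (hcomp : IsCompact G) (ubar : X)
    (hbdd : BddBelow (Set.range fun v : Y =>
      ⨆ p : G, ((p : WeakDual ℝ X × WeakDual ℝ Y).1 ubar +
        (p : WeakDual ℝ X × WeakDual ℝ Y).2 v))) :
    ∃ xstar : WeakDual ℝ X, (xstar, (0 : WeakDual ℝ Y)) ∈ G ∧
      xstar ubar = (⨅ v : Y, ⨆ p : G, ((p : WeakDual ℝ X × WeakDual ℝ Y).1 ubar +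
        (p : WeakDual ℝ X × WeakDual ℝ Y).2 v)) ∧
      sSup {r : ℝ | ∃ q : WeakDual ℝ X, (q, (0 : WeakDual ℝ Y)) ∈ G ∧ r = q ubar} =
        ⨅ v : Y, ⨆ p : G, ((p : WeakDual ℝ X × WeakDual ℝ Y).1 ubar +
          (p : WeakDual ℝ X × WeakDual ℝ Y).2 v) := by
  change BddBelow (range (supportFunction G ubar)) at hbdd
  change ∃ x : WeakDual ℝ X, (x, 0) ∈ G ∧ x ubar = ⨅ v, supportFunction G ubar v ∧
    sSup {r : ℝ | ∃ q : WeakDual ℝ X, (q, 0) ∈ G ∧ r = q ubar} = ⨅ v, supportFunction G ubar v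
  set I := ⨅ v, supportFunction G ubar v
  have hslice : ∀ q : WeakDual ℝ X, (q, 0) ∈ G → q ubar ≤ I := fun q hq =>
    le_ciInf fun v => (add_zero (q ubar)).symm.le.trans (le_supportFunction hcomp hq v)
  obtain ⟨x, hx, hIx⟩ :=
    exists_prod_zero_mem_of_forall_le_supportFunction hconv hcomp hne (ciInf_le hbdd)
  have hxI : x ubar = I := (hslice x hx).antisymm hIx
  refine ⟨x, hx, hxI, IsGreatest.csSup_eq ⟨⟨x, hx, hxI.symm⟩, ?_⟩⟩
  rintro _ ⟨q, hq, rfl⟩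
  exact hslice q hq

/-- Claim 3 of Lemma 3.6: if `G ⊆ X* × Y*` is nonempty, convex, weak*-compact and
`inf_v σ_G(ū,v) > -∞`, then there is `x̄*` with `(x̄*,0) ∈ G` attaining this infimum,
and `sup{⟨x*,ū⟩ : (x*,0) ∈ G} = inf_v σ_G(ū,v)`. -/
theorem slice_sup_eq_inf_support {X Y : Type*} [NormedAddCommGroup X] [NormedSpace ℝ X]
    [CompleteSpace X] [NormedAddCommGroup Y] [NormedSpace ℝ Y] [CompleteSpace Y]
    (G : Set (WeakDual ℝ X × WeakDual ℝ Y)) (hne : G.Nonempty) (hconv : Convex ℝ G)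
    (hcomp : IsCompact G) (ubar : X)
    (hbdd : BddBelow (Set.range fun v : Y =>
      ⨆ p : G, ((p : WeakDual ℝ X × WeakDual ℝ Y).1 ubar +
        (p : WeakDual ℝ X × WeakDual ℝ Y).2 v))) :
    ∃ xstar : WeakDual ℝ X, (xstar, (0 : WeakDual ℝ Y)) ∈ G ∧
      xstar ubar = (⨅ v : Y, ⨆ p : G, ((p : WeakDual ℝ X × WeakDual ℝ Y).1 ubar +
        (p : WeakDual ℝ X × WeakDual ℝ Y).2 v)) ∧
      sSup {r : ℝ | ∃ q : WeakDual ℝ X, (q, (0 : WeakDual ℝ Y)) ∈ G ∧ r = q ubar} =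
        ⨅ v : Y, ⨆ p : G, ((p : WeakDual ℝ X × WeakDual ℝ Y).1 ubar +
          (p : WeakDual ℝ X × WeakDual ℝ Y).2 v) :=
  slice_sup_eq_inf_support_general G hne hconv hcomp ubar hbdd
end

section
/- Let F₂ : ℝ ⇉ ℝ be given by F₂(x) = [|x|, |x|+1] and f(x,y) = y. Then φ(x) = inf_{y∈F₂(x)} f(x,y) = |x| and the Clarke coderivative satisfies D*_C F₂(0,0)(1) = [−1, 1], which equals the Clarke subdifferential ∂°φ(0) = ∂°|·|(0) = [−1,1]. -/
open Filter Topology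

/-- Clarke tangent cone. -/
def clarkeTangent {Z : Type*} [NormedAddCommGroup Z] [NormedSpace ℝ Z]
    (A : Set Z) (z : Z) : Set Z :=
  {u | ∀ (x : ℕ → Z) (t : ℕ → ℝ), (∀ k, x k ∈ A) → Tendsto x atTop (𝓝 z) →
    (∀ k, 0 < t k) → Tendsto t atTop (𝓝 0) →
    ∃ w : ℕ → Z, Tendsto w atTop (𝓝 u) ∧ ∀ k, x k + t k • w k ∈ A}

/-- Clarke normal cone to a subset of `ℝ × ℝ` (via the dot-product pairing). -/
def clarkeNormal2 (A : Set (ℝ × ℝ)) (z : ℝ × ℝ) : Set (ℝ × ℝ) :=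
  {p | ∀ u ∈ clarkeTangent A z, p.1 * u.1 + p.2 * u.2 ≤ 0}

/-!
Near the origin the graph of `F₂` is the epigraph of `|·|`, a closed convex cone, so its Clarke
tangent cone at `(0,0)` is that epigraph and the normal cone is its polar
`{(ξ, -λ) | |ξ| ≤ λ}`. On the other side, the Clarke derivative of a norm at `0` is the norm
itself: the triangle inequality bounds the difference quotients by `‖u‖`, and the quotients along
`x = 0` attain it. Both sets of the theorem are therefore `{ξ | |ξ| ≤ 1}`.
-/

section ClarkeTangent

variable {Z : Type*} [NormedAddCommGroup Z] [NormedSpace ℝ Z]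

/-- The finitely many indices at which `x k + t k • w k ∉ A` can be repaired by `w k = 0`. -/
theorem mem_clarkeTangent_of_eventually {A : Set Z} {z u : Z}
    (h : ∀ (x : ℕ → Z) (t : ℕ → ℝ), (∀ k, x k ∈ A) → Tendsto x atTop (𝓝 z) →
      (∀ k, 0 < t k) → Tendsto t atTop (𝓝 0) →
      ∃ w : ℕ → Z, Tendsto w atTop (𝓝 u) ∧ ∀ᶠ k in atTop, x k + t k • w k ∈ A) :
    u ∈ clarkeTangent A z := by
  classical
  intro x t hxA hx ht ht0
  obtain ⟨w, hw, hwA⟩ := h x t hxA hx ht ht0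
  refine ⟨fun k => if x k + t k • w k ∈ A then w k else 0, ?_, fun k => ?_⟩
  · refine hw.congr' ?_
    filter_upwards [hwA] with k hk
    simp only [hk, if_true]
  · by_cases hk : x k + t k • w k ∈ A
    · simp only [hk, if_true]
    · simpa only [hk, if_false, smul_zero, add_zero] using hxA k

theorem clarkeTangent_subset_of_isClosed {A C : Set Z} {z : Z} (hz : z ∈ A) (hC : IsClosed C)
    (hAC : ∀ t : ℝ, 0 < t → ∀ w, z + t • w ∈ A → w ∈ C) :
    clarkeTangent A z ⊆ C := by
  intro u hu
  obtain ⟨w, hw, hwA⟩ := hu (fun _ => z) (fun k => 1 / ((k : ℝ) + 1)) (fun _ => hz)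
    tendsto_const_nhds (fun k => by positivity) tendsto_one_div_add_atTop_nhds_zero_nat
  exact hC.mem_of_tendsto hw (Eventually.of_forall fun k => hAC _ (by positivity) _ (hwA k))

end ClarkeTangent

def graphF₂ : Set (ℝ × ℝ) := {q | |q.1| ≤ q.2 ∧ q.2 ≤ |q.1| + 1}

theorem clarkeTangent_graphF₂ : clarkeTangent graphF₂ (0, 0) = {u | |u.1| ≤ u.2} := by
  refine subset_antisymm ?_ fun u hu => mem_clarkeTangent_of_eventually ?_
  · refine clarkeTangent_subset_of_isClosed (by simp [graphF₂]) ?_ fun t ht w hw => ?_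
    · exact isClosed_le (continuous_abs.comp continuous_fst) continuous_snd
    · simp only [graphF₂, Set.mem_ofPred_eq, Prod.fst_add, Prod.snd_add, Prod.smul_fst,
        Prod.smul_snd, smul_eq_mul, zero_add, abs_mul, abs_of_pos ht] at hw
      exact le_of_mul_le_mul_left hw.1 ht
  intro x t hxA hx ht ht0
  refine ⟨fun _ => u, tendsto_const_nhds, ?_⟩
  have hx₂ : Tendsto (fun k => (x k).2 + t k * u.2) atTop (𝓝 0) := by
    simpa using ((continuous_snd.tendsto _).comp hx).add (ht0.mul_const u.2)
  filter_upwards [hx₂.eventually_lt_const one_pos] with k hk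
  have hxk := (hxA k).1
  simp only [graphF₂, Set.mem_ofPred_eq, Prod.fst_add, Prod.snd_add, Prod.smul_fst,
    Prod.smul_snd, smul_eq_mul]
  refine ⟨?_, by linarith [abs_nonneg ((x k).1 + t k * u.1)]⟩
  calc |(x k).1 + t k * u.1| ≤ |(x k).1| + t k * |u.1| := by
        simpa [abs_mul, abs_of_pos (ht k)] using abs_add_le (x k).1 (t k * u.1)
    _ ≤ (x k).2 + t k * u.2 := add_le_add hxk (mul_le_mul_of_nonneg_left hu (ht k).le)

theorem clarkeNormal2_graphF₂ : clarkeNormal2 graphF₂ (0, 0) = {p | |p.1| ≤ -p.2} := by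
  ext p
  simp only [clarkeNormal2, clarkeTangent_graphF₂, Set.mem_ofPred_eq]
  constructor
  · intro hp
    have h₁ := hp (1, 1) (by norm_num)
    have h₂ := hp (-1, 1) (by norm_num)
    exact abs_le.mpr ⟨by linarith, by linarith⟩
  · intro hp u hu
    have h₁ : p.1 * u.1 ≤ |p.1| * |u.1| := (le_abs_self _).trans (abs_mul _ _).le
    nlinarith [abs_nonneg p.1, abs_nonneg u.1]

theorem clarkeDeriv_norm_zero {Z : Type*} [NormedAddCommGroup Z] [NormedSpace ℝ Z] (u : Z) :
    clarkeDeriv (fun w => ‖w‖) 0 u = ‖u‖ := by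
  set F : Filter (Z × ℝ) := 𝓝 0 ×ˢ 𝓝[>] 0
  have hpos : ∀ᶠ p in F, 0 < p.2 := Eventually.prod_inr self_mem_nhdsWithin _
  have hbound : ∀ᶠ p in F, |(‖p.1 + p.2 • u‖ - ‖p.1‖) / p.2| ≤ ‖u‖ := by
    filter_upwards [hpos] with p hp
    rw [abs_div, abs_of_pos hp, div_le_iff₀ hp]
    calc |‖p.1 + p.2 • u‖ - ‖p.1‖| ≤ ‖p.1 + p.2 • u - p.1‖ := abs_norm_sub_norm_le _ _
      _ = ‖u‖ * p.2 := by rw [add_sub_cancel_left, norm_smul, Real.norm_of_nonneg hp.le, mul_comm]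
  have hle := hbound.mono fun _ h => (abs_le.mp h).2
  have hge := hbound.mono fun _ h => (abs_le.mp h).1
  have hfreq : ∃ᶠ p in F, ‖u‖ ≤ (‖p.1 + p.2 • u‖ - ‖p.1‖) / p.2 := by
    have hx₀ : Tendsto (fun t : ℝ => ((0 : Z), t)) (𝓝[>] 0) F :=
      tendsto_const_nhds.prodMk tendsto_id
    refine hx₀.frequently (Eventually.frequently ?_)
    filter_upwards [self_mem_nhdsWithin] with t (ht : 0 < t)
    rw [zero_add, norm_zero, sub_zero, norm_smul, Real.norm_of_nonneg ht.le,
      mul_div_cancel_left₀ _ ht.ne']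
  exact le_antisymm (limsup_le_of_le (isCoboundedUnder_le_of_eventually_le _ hge) hle)
    (le_limsup_of_frequently_le hfreq ⟨‖u‖, eventually_map.mpr hle⟩)

theorem setOf_forall_mul_le_abs : {ξ : ℝ | ∀ u : ℝ, ξ * u ≤ |u|} = Set.Icc (-1) 1 := by
  ext ξ
  simp only [Set.mem_ofPred_eq, Set.mem_Icc]
  constructor
  · intro h
    have h₁ := h 1
    have h₂ := h (-1)
    norm_num at h₁ h₂
    exact ⟨by linarith, h₁⟩
  · intro hξ u
    calc ξ * u ≤ |ξ| * |u| := (le_abs_self _).trans (abs_mul _ _).le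
      _ ≤ 1 * |u| := mul_le_mul_of_nonneg_right (abs_le.mpr hξ) (abs_nonneg u)
      _ = |u| := one_mul _

/-- Case 2 of Example 3.9: for `F₂(x) = [|x|, |x|+1]` and `f(x,y) = y`, the marginal
function is `|x|`, and the Clarke coderivative `D*_C F₂(0,0)(1)` equals `[-1,1]`,
which is exactly the Clarke subdifferential of `|·|` at `0`. -/
theorem example_F2_coderivative :
    (∀ x : ℝ, sInf {r : ℝ | ∃ y : ℝ, (|x| ≤ y ∧ y ≤ |x| + 1) ∧ r = y} = |x|) ∧
    {xstar : ℝ | ((xstar, -1) : ℝ × ℝ) ∈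
        clarkeNormal2 {q : ℝ × ℝ | |q.1| ≤ q.2 ∧ q.2 ≤ |q.1| + 1} (0, 0)} =
      Set.Icc (-1 : ℝ) 1 ∧
    {xstar : ℝ | ∀ u : ℝ, xstar * u ≤ clarkeDeriv (fun w : ℝ => |w|) 0 u} =
      Set.Icc (-1 : ℝ) 1 := by
  refine ⟨fun x => ?_, ?_, ?_⟩
  · simp only [exists_eq_right']
    exact csInf_Icc (by linarith)
  · change {ξ : ℝ | ((ξ, -1) : ℝ × ℝ) ∈ clarkeNormal2 graphF₂ (0, 0)} = _
    simp only [clarkeNormal2_graphF₂, Set.mem_ofPred_eq, neg_neg]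
    ext ξ
    exact abs_le (b := (1 : ℝ))
  · simpa only [← Real.norm_eq_abs, clarkeDeriv_norm_zero] using setOf_forall_mul_le_abs
end

section
/- Let X, Y be Banach spaces, F : X ⇉ Y with nonempty values, and suppose F satisfies the Aubin property at (x̄, ȳ) ∈ gph F with constant ℓ ≥ 0. Then the distance-to-image function Δ_F(x,y) = inf_{u∈F(x)} ‖y − u‖ is locally Lipschitz at (x̄, ȳ); specifically, there exist neighborhoods of x̄ and ȳ on which Δ_F is Lipschitz with constant max{ℓ, 1} with respect to the sum norm on X × Y. -/
open Filter Topology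

/-!
Near `(x̄, ȳ)` the infimum defining `dist(y, F x)` may be restricted to points of `F x` lying in
the neighbourhood `V` of the Aubin property: `F x` has a point close to `ȳ`, hence close to `y`.
The Aubin property moves each such point into `F x'` at cost `ℓ ‖x - x'‖`, and moving `y` to `y'`
costs `‖y - y'‖`.  Both one-sided estimates together give the Lipschitz bound.
-/

namespace Metric

variable {X Y : Type*} [PseudoMetricSpace X] [PseudoMetricSpace Y]

theorem infDist_le_infDist_add_of_forall_exists_dist_le {s t : Set Y} {c : ℝ} (hs : s.Nonempty)
    (hst : ∀ z ∈ s, ∃ z' ∈ t, dist z z' ≤ c) (y : Y) :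
    infDist y t ≤ infDist y s + c := by
  rw [← sub_le_iff_le_add, le_infDist hs]
  intro z hz
  obtain ⟨z', hz't, hzz'⟩ := hst z hz
  linarith [infDist_le_dist_of_mem (x := y) hz't, dist_triangle y z z']

theorem infDist_le_infDist_add_of_forall_mem_inter_exists_dist_le {s t V : Set Y} {c : ℝ}
    {y z : Y} (hz : z ∈ s) (hV : closedBall y (dist z y) ⊆ V)
    (hst : ∀ w ∈ s ∩ V, ∃ w' ∈ t, dist w w' ≤ c) (y' : Y) :
    infDist y' t ≤ infDist y s + dist y' y + c := by
  rw [← infDist_inter_closedBall_of_mem hz]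
  calc infDist y' t ≤ infDist y' (s ∩ closedBall y (dist z y)) + c :=
        infDist_le_infDist_add_of_forall_exists_dist_le (s := s ∩ closedBall y (dist z y))
          ⟨z, hz, mem_closedBall.2 le_rfl⟩
          (fun w hw => hst w ⟨hw.1, hV hw.2⟩) y'
    _ ≤ infDist y (s ∩ closedBall y (dist z y)) + dist y' y + c := by
        gcongr
        exact infDist_le_infDist_add_dist

theorem exists_nhds_abs_infDist_sub_le_of_aubin {F : X → Set Y} {xbar : X} {ybar : Y}
    (hybar : ybar ∈ F xbar) {ℓ : ℝ} {U : Set X} {V : Set Y} (hU : U ∈ 𝓝 xbar) (hV : V ∈ 𝓝 ybar)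
    (haubin : ∀ x ∈ U, ∀ x' ∈ U, ∀ y ∈ F x ∩ V, ∃ y' ∈ F x', dist y y' ≤ ℓ * dist x x') :
    ∃ U' ∈ 𝓝 xbar, ∃ V' ∈ 𝓝 ybar, ∀ x ∈ U', ∀ x' ∈ U', ∀ y ∈ V', ∀ y' ∈ V',
      |infDist y (F x) - infDist y' (F x')| ≤ ℓ * dist x x' + dist y y' := by
  obtain ⟨ρ, hρ, hρV⟩ := mem_nhds_iff.mp hV
  set U' := U ∩ {x | ℓ * dist xbar x < ρ / 4}
  have hU' : U' ∈ 𝓝 xbar :=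
    inter_mem hU <| (isOpen_lt (by fun_prop) continuous_const).mem_nhds (by simpa using hρ)
  have one_sided : ∀ x ∈ U', ∀ x' ∈ U', ∀ y ∈ ball ybar (ρ / 4), ∀ y',
      infDist y' (F x') ≤ infDist y (F x) + dist y' y + ℓ * dist x x' := by
    intro x hx x' hx' y hy y'
    obtain ⟨z, hz, hdz⟩ := haubin xbar (mem_of_mem_nhds hU) x hx.1 ybar
      ⟨hybar, mem_of_mem_nhds hV⟩
    have hxℓ : ℓ * dist xbar x < ρ / 4 := hx.2
    have hzy : dist z y < ρ / 2 := by
      linarith [dist_triangle z ybar y, dist_comm z ybar, mem_ball'.mp hy]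
    refine infDist_le_infDist_add_of_forall_mem_inter_exists_dist_le hz
      ((closedBall_subset_ball' ?_).trans hρV) (haubin x hx.1 x' hx'.1) y'
    linarith [mem_ball.mp hy]
  refine ⟨U', hU', ball ybar (ρ / 4), ball_mem_nhds _ (by positivity), ?_⟩
  intro x hx x' hx' y hy y' hy'
  have h₁ := one_sided x hx x' hx' y hy y'
  have h₂ := one_sided x' hx' x hx y' hy' y
  rw [dist_comm y'] at h₁
  rw [dist_comm x'] at h₂
  rw [abs_sub_le_iff]
  constructor <;> linarith

end Metric

theorem distFun_locally_lipschitz_of_aubin_general {X Y : Type*} [NormedAddCommGroup X]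
    [NormedAddCommGroup Y]
    (F : X → Set Y) (xbar : X) (ybar : Y)
    (hybar : ybar ∈ F xbar) (ℓ : ℝ)
    (haubin : ∃ U ∈ 𝓝 xbar, ∃ V ∈ 𝓝 ybar, ∀ x ∈ U, ∀ x' ∈ U, ∀ y ∈ F x ∩ V,
      ∃ y' ∈ F x', ‖y - y'‖ ≤ ℓ * ‖x - x'‖) :
    ∃ U' ∈ 𝓝 xbar, ∃ V' ∈ 𝓝 ybar, ∀ x ∈ U', ∀ x' ∈ U', ∀ y ∈ V', ∀ y' ∈ V',
      |Metric.infDist y (F x) - Metric.infDist y' (F x')| ≤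
        max ℓ 1 * (‖x - x'‖ + ‖y - y'‖) := by
  obtain ⟨U, hU, V, hV, hA⟩ := haubin
  obtain ⟨U', hU', V', hV', hlip⟩ :=
    Metric.exists_nhds_abs_infDist_sub_le_of_aubin hybar hU hV (by simpa only [dist_eq_norm])
  refine ⟨U', hU', V', hV', fun x hx x' hx' y hy y' hy' => (hlip x hx x' hx' y hy y' hy').trans ?_⟩
  rw [dist_eq_norm, dist_eq_norm, mul_add]
  gcongr
  · exact le_max_left ℓ 1
  · exact le_mul_of_one_le_left (norm_nonneg _) (le_max_right ℓ 1)

/-- If `F` has nonempty values and satisfies the Aubin property at `(x̄,ȳ) ∈ gph F`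
with constant `ℓ`, then `Δ_F(x,y) = dist(y, F(x))` is Lipschitz with constant
`max ℓ 1` (w.r.t. the sum norm) on a product of neighborhoods of `x̄` and `ȳ`. -/
theorem distFun_locally_lipschitz_of_aubin {X Y : Type*} [NormedAddCommGroup X]
    [NormedSpace ℝ X] [CompleteSpace X] [NormedAddCommGroup Y] [NormedSpace ℝ Y]
    [CompleteSpace Y]
    (F : X → Set Y) (hFne : ∀ x, (F x).Nonempty) (xbar : X) (ybar : Y)
    (hybar : ybar ∈ F xbar) (ℓ : ℝ) (hℓ : 0 ≤ ℓ)
    (haubin : ∃ U ∈ 𝓝 xbar, ∃ V ∈ 𝓝 ybar, ∀ x ∈ U, ∀ x' ∈ U, ∀ y ∈ F x ∩ V,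
      ∃ y' ∈ F x', ‖y - y'‖ ≤ ℓ * ‖x - x'‖) :
    ∃ U' ∈ 𝓝 xbar, ∃ V' ∈ 𝓝 ybar, ∀ x ∈ U', ∀ x' ∈ U', ∀ y ∈ V', ∀ y' ∈ V',
      |Metric.infDist y (F x) - Metric.infDist y' (F x')| ≤
        max ℓ 1 * (‖x - x'‖ + ‖y - y'‖) :=
  distFun_locally_lipschitz_of_aubin_general F xbar ybar hybar ℓ haubin
end
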